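/- arXiv:1807.05299 — 2 statements merged into one kernel-verified Lean document; each statement's English description precedes it below -/
import Mathlib

section
/- For finite sets K and L, the double sum over all subsets I ⊆ K and J ⊆ L of (-2)^{|I|+|J|} · 2^{-|I ∪ J|} equals 1 if K = L and 0 otherwise. -/
/-!
After rewriting the weight as `(-1) ^ (|I| + |J|) * 2 ^ |I ∩ J|`, the double sum factors as a
product over the elements of `K ∪ L`: an element of `K ∩ L` contributes `1 - 1 - 1 + 2 = 1`,
an element of only one of the two sets contributes `1 - 1 = 0`.
-/

open Finset

section

variable {α R : Type*} [DecidableEq α] [CommRing R]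

def signedInterSum (K L : Finset α) : R :=
  ∑ I ∈ K.powerset, ∑ J ∈ L.powerset, (-1) ^ (#I + #J) * 2 ^ #(I ∩ J)

lemma signedInterSum_comm (K L : Finset α) :
    (signedInterSum K L : R) = signedInterSum L K := by
  unfold signedInterSum
  rw [sum_comm]
  simp only [add_comm, inter_comm]

lemma signedInterSum_insert_left {a : α} {K L : Finset α} (haK : a ∉ K) (haL : a ∉ L) :
    (signedInterSum (insert a K) L : R) = 0 := by
  unfold signedInterSum
  rw [sum_powerset_insert haK, ← sum_add_distrib]
  refine sum_eq_zero fun I hI => ?_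
  have haI : a ∉ I := notMem_mono (mem_powerset.1 hI) haK
  rw [← sum_add_distrib]
  refine sum_eq_zero fun J hJ => ?_
  have haJ : a ∉ J := notMem_mono (mem_powerset.1 hJ) haL
  rw [card_insert_of_notMem haI, insert_inter_of_notMem haJ]
  ring

lemma signedInterSum_insert_right {a : α} {K L : Finset α} (haK : a ∉ K) (haL : a ∉ L) :
    (signedInterSum K (insert a L) : R) = 0 := by
  rw [signedInterSum_comm, signedInterSum_insert_left haL haK]

lemma signedInterSum_insert_insert {a : α} {K L : Finset α} (haK : a ∉ K) (haL : a ∉ L) :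
    (signedInterSum (insert a K) (insert a L) : R) = signedInterSum K L := by
  unfold signedInterSum
  rw [sum_powerset_insert haK, ← sum_add_distrib]
  refine sum_congr rfl fun I hI => ?_
  have haI : a ∉ I := notMem_mono (mem_powerset.1 hI) haK
  rw [sum_powerset_insert haL, sum_powerset_insert haL, ← sum_add_distrib, ← sum_add_distrib,
    ← sum_add_distrib]
  refine sum_congr rfl fun J hJ => ?_
  have haJ : a ∉ J := notMem_mono (mem_powerset.1 hJ) haL
  rw [card_insert_of_notMem haI, card_insert_of_notMem haJ, insert_inter_of_notMem haJ,
    inter_insert_of_notMem haI, ← insert_inter_distrib, card_insert_of_notMem (by simp [haI])]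
  ring

theorem signedInterSum_eq (K L : Finset α) :
    (signedInterSum K L : R) = if K = L then 1 else 0 := by
  induction K using Finset.induction_on generalizing L with
  | empty =>
    obtain rfl | ⟨a, haL⟩ := L.eq_empty_or_nonempty
    · simp [signedInterSum]
    · rw [← insert_erase haL, signedInterSum_insert_right (notMem_empty a) (notMem_erase a L),
        if_neg (insert_ne_empty a _).symm]
  | @insert a K haK ih =>
    by_cases haL : a ∈ L
    · have haL' : a ∉ L.erase a := notMem_erase a L
      rw [← insert_erase haL, signedInterSum_insert_insert haK haL', ih]
      simp only [insert_erase_invOn.2.injOn.eq_iff haK haL']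
    · rw [signedInterSum_insert_left haK haL,
        if_neg (ne_of_mem_of_not_mem' (mem_insert_self a K) haL)]

lemma neg_two_pow_mul_two_zpow_neg_card_union {F : Type*} [Field F] [NeZero (2 : F)]
    (I J : Finset α) :
    (-2 : F) ^ (#I + #J) * 2 ^ (-(#(I ∪ J) : ℤ)) = (-1) ^ (#I + #J) * 2 ^ #(I ∩ J) := by
  rw [← card_union_add_card_inter, neg_pow, pow_add 2, zpow_neg, zpow_natCast]
  field_simp

end

theorem stmt_2 {α : Type*} [DecidableEq α] (K L : Finset α) :
    ∑ I ∈ K.powerset, ∑ J ∈ L.powerset,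
      (-2 : ℚ) ^ (I.card + J.card) * (2 : ℚ) ^ (-((I ∪ J).card : ℤ)) =
      if K = L then 1 else 0 := by
  simp only [neg_two_pow_mul_two_zpow_neg_card_union]
  exact signedInterSum_eq K L
end

section
/- Let A, B, C, D ⊆ {1,…,n}, and suppose 𝔐 = {I ⊆ {1,…,n} : B ∪ D ⊆ I and A ⊍ (I\B) = C ⊍ (I\D)} is nonempty. Then 𝔐 = {(B ∪ D) ⊍ N : N ⊆ {1,…,n}, N ∩ (B ∪ D) = ∅, N ∩ (A ∪ C) = ∅}. -/
set_option maxHeartbeats 1000000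


theorem stmt_15 (n : ℕ) (A B C D : Finset (Fin n))
    (hne : ({I : Finset (Fin n) | B ∪ D ⊆ I ∧ Disjoint A (I \ B) ∧ Disjoint C (I \ D) ∧
        A ∪ (I \ B) = C ∪ (I \ D)} : Set (Finset (Fin n))).Nonempty) :
    {I : Finset (Fin n) | B ∪ D ⊆ I ∧ Disjoint A (I \ B) ∧ Disjoint C (I \ D) ∧
        A ∪ (I \ B) = C ∪ (I \ D)} =
      {M : Finset (Fin n) | ∃ N : Finset (Fin n),
        Disjoint N (B ∪ D) ∧ Disjoint N (A ∪ C) ∧ M = (B ∪ D) ∪ N} := by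
  obtain ⟨I₀, hs0, ha0, hc0, he0⟩ := hne
  have hB0 : ∀ x, x ∈ B → x ∈ I₀ := fun x hx => hs0 (Finset.mem_union_left _ hx)
  have hD0 : ∀ x, x ∈ D → x ∈ I₀ := fun x hx => hs0 (Finset.mem_union_right _ hx)
  have ha0' : ∀ x, x ∈ A → ¬(x ∈ I₀ ∧ x ∉ B) := by
    intro x hx h
    exact Finset.disjoint_left.mp ha0 hx (Finset.mem_sdiff.mpr h)
  have hc0' : ∀ x, x ∈ C → ¬(x ∈ I₀ ∧ x ∉ D) := by
    intro x hx h
    exact Finset.disjoint_left.mp hc0 hx (Finset.mem_sdiff.mpr h)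
  have he0' : ∀ x, (x ∈ A ∨ (x ∈ I₀ ∧ x ∉ B)) ↔ (x ∈ C ∨ (x ∈ I₀ ∧ x ∉ D)) := by
    intro x
    have := Finset.ext_iff.mp he0 x
    simpa [Finset.mem_union, Finset.mem_sdiff] using this
  have key : ∀ x, (x ∈ A ∨ (x ∈ D ∧ x ∉ B)) ↔ (x ∈ C ∨ (x ∈ B ∧ x ∉ D)) := by
    intro x
    have h1 := hB0 x; have h2 := hD0 x; have h3 := ha0' x; have h4 := hc0' x
    have h5 := he0' x
    clear * - h1 h2 h3 h4 h5
    tauto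
  ext I
  simp only [Set.mem_setOf_eq]
  constructor
  · rintro ⟨hs, ha, hc, he⟩
    refine ⟨I \ (B ∪ D), Finset.sdiff_disjoint, ?_, (Finset.union_sdiff_of_subset hs).symm⟩
    rw [Finset.disjoint_left]
    intro x hx hxAC
    simp only [Finset.mem_sdiff, Finset.mem_union] at hx hxAC
    rcases hxAC with h | h
    · exact Finset.disjoint_left.mp ha h (Finset.mem_sdiff.mpr ⟨hx.1, fun hb => hx.2 (Or.inl hb)⟩)
    · exact Finset.disjoint_left.mp hc h (Finset.mem_sdiff.mpr ⟨hx.1, fun hd => hx.2 (Or.inr hd)⟩)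
  · rintro ⟨N, hN1, hN2, rfl⟩
    have hN1' : ∀ x, x ∈ N → x ∉ B ∧ x ∉ D := by
      intro x hx
      have := Finset.disjoint_left.mp hN1 hx
      simp only [Finset.mem_union] at this; tauto
    have hN2' : ∀ x, x ∈ N → x ∉ A ∧ x ∉ C := by
      intro x hx
      have := Finset.disjoint_left.mp hN2 hx
      simp only [Finset.mem_union] at this; tauto
    refine ⟨Finset.subset_union_left, ?_, ?_, ?_⟩
    · rw [Finset.disjoint_left]
      intro x hx hmem
      simp only [Finset.mem_sdiff, Finset.mem_union] at hmem
      have h1 := hN1' x; have h2 := hN2' x; have h3 := ha0' x; have h4 := hD0 x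
      tauto
    · rw [Finset.disjoint_left]
      intro x hx hmem
      simp only [Finset.mem_sdiff, Finset.mem_union] at hmem
      have h1 := hN1' x; have h2 := hN2' x; have h3 := hc0' x; have h4 := hB0 x
      tauto
    · ext x
      simp only [Finset.mem_union, Finset.mem_sdiff]
      have h1 := hN1' x; have h2 := hN2' x; have h5 := key x
      tauto
end
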